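/- For every positive integer n divisible by 66, there exists a K4-free simple graph H on n vertices with exactly n²/4 + n/66 edges such that f(H) = 2n²/33 − 7n/33. -/

import Mathlib

open SimpleGraph

/-- `{u, v}` is a `K₄`-saturating edge of `G`: `u ≠ v`, `u` and `v` are nonadjacent, and
adding the edge `uv` to `G` creates a copy of `K₄`. -/
def SatEdge {V : Type*} (G : SimpleGraph V) (u v : V) : Prop :=
  u ≠ v ∧ ¬ G.Adj u v ∧ ¬ (G ⊔ SimpleGraph.fromEdgeSet {s(u, v)}).CliqueFree 4

/-- `f G`: the number of `K₄`-saturating edges of `G`. -/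
noncomputable def satCount {V : Type*} (G : SimpleGraph V) : ℕ :=
  {e : Sym2 V | ∃ u v, e = s(u, v) ∧ SatEdge G u v}.ncard

/-! `H` is the blow-up of the 5-cycle `01234` with chord `02` into independent parts of sizes
`16m, 4m + 1, 16m, 15m, 15m - 1`, where `n = 66m`. It is 3-colourable, hence `K₄`-free. In a
`K₄`-free graph a non-edge `uv` is saturating iff the common neighbourhood of `u` and `v`
contains an edge; in the blow-up this happens exactly for the pairs inside one of the parts
over the triangle `012`. Both counts then follow from the degree sum formula, since every
degree is a sum of part sizes. -/

open Finset Function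

section SaturatingEdges

variable {V : Type*} {G : SimpleGraph V} {u v : V}

lemma SatEdge.symm (h : SatEdge G u v) : SatEdge G v u := by
  obtain ⟨hne, hnadj, hcf⟩ := h
  exact ⟨hne.symm, fun h ↦ hnadj h.symm, by rwa [Sym2.eq_swap]⟩

def satGraph (G : SimpleGraph V) : SimpleGraph V where
  Adj := SatEdge G
  symm := ⟨fun _ _ ↦ SatEdge.symm⟩
  loopless := ⟨fun _ h ↦ h.1 rfl⟩

@[simp]
lemma satGraph_adj : (satGraph G).Adj u v ↔ SatEdge G u v := Iff.rfl

lemma satCount_eq_ncard_edgeSet (G : SimpleGraph V) :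
    satCount G = (satGraph G).edgeSet.ncard := by
  rw [satCount]
  congr 1
  ext e
  induction e using Sym2.ind with
  | _ a b =>
    refine ⟨?_, fun h ↦ ⟨a, b, rfl, h⟩⟩
    rintro ⟨u, v, he, h⟩
    rcases Sym2.eq_iff.mp he with ⟨rfl, rfl⟩ | ⟨rfl, rfl⟩
    exacts [h, h.symm]

lemma satEdge_iff_of_cliqueFree (hG : G.CliqueFree 4) :
    SatEdge G u v ↔ u ≠ v ∧ ¬ G.Adj u v ∧
      ∃ x y, G.Adj x y ∧ G.Adj u x ∧ G.Adj u y ∧ G.Adj v x ∧ G.Adj v y := by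
  classical
  change _ ∧ _ ∧ ¬ (G ⊔ edge u v).CliqueFree 4 ↔ _
  refine and_congr_right fun hne ↦ and_congr_right fun _ ↦ ⟨fun h ↦ ?_, ?_⟩
  · -- a `K₄` of `G ⊔ edge u v` must use the new edge, so it is `{u, v, x, y}` with `xy ∈ G`
    obtain ⟨t, ht⟩ := not_forall_not.mp h
    have hu : u ∈ t := hG.mem_of_sup_edge_isNClique ht
    have hv : v ∈ t := hG.mem_of_sup_edge_isNClique (edge_comm u v ▸ ht)
    obtain ⟨hcu, hcv⟩ := (isClique_sup_edge_of_ne_iff hne).mp ht.isClique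
    obtain ⟨x, y, hxy, hrest⟩ := card_eq_two.mp <| show #((t.erase u).erase v) = 2 by
      rw [card_erase_of_mem (mem_erase.mpr ⟨hne.symm, hv⟩), card_erase_of_mem hu, ht.card_eq]
    have hx : x ∈ (t.erase u).erase v := by simp [hrest]
    have hy : y ∈ (t.erase u).erase v := by simp [hrest]
    simp only [mem_erase] at hx hy
    exact ⟨x, y, hcu ⟨hx.2.2, hx.2.1⟩ ⟨hy.2.2, hy.2.1⟩ hxy,
      hcv ⟨hu, hne⟩ ⟨hx.2.2, hx.1⟩ hx.2.1.symm, hcv ⟨hu, hne⟩ ⟨hy.2.2, hy.1⟩ hy.2.1.symm,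
      hcu ⟨hv, hne.symm⟩ ⟨hx.2.2, hx.2.1⟩ hx.1.symm, hcu ⟨hv, hne.symm⟩ ⟨hy.2.2, hy.2.1⟩ hy.1.symm⟩
  · rintro ⟨x, y, hxy, hux, huy, hvx, hvy⟩
    have h2 : G.IsNClique 2 {x, y} := (isNClique_singleton.mpr rfl).insert (by simpa)
    have h3 : (G ⊔ edge u v).IsNClique 3 {v, x, y} := (h2.mono le_sup_left).insert (by simp [*])
    exact (h3.insert (a := u) (by simp [edge_adj, hne, hux, huy])).not_cliqueFree

end SaturatingEdges

section Blowup

variable {V ι : Type*}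

lemma cliqueFree_comap {F : SimpleGraph ι} {n : ℕ} (h : F.CliqueFree n) (p : V → ι) :
    (F.comap p).CliqueFree n := by
  by_contra hc
  obtain ⟨f⟩ := (not_cliqueFree_iff_top_isContained n).mp hc
  let g : (⊤ : SimpleGraph (Fin n)) →g F := ⟨p ∘ f, f.toHom.map_adj⟩
  exact (not_cliqueFree_iff_top_isContained n).mpr ⟨g.toCopy g.injective_of_top_hom⟩ h

lemma satEdge_comap_iff {F : SimpleGraph ι} (hF : F.CliqueFree 4) {p : V → ι} (hp : Surjective p)
    {u v : V} :
    SatEdge (F.comap p) u v ↔ u ≠ v ∧ ¬ F.Adj (p u) (p v) ∧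
      ∃ i j, F.Adj i j ∧ F.Adj (p u) i ∧ F.Adj (p u) j ∧ F.Adj (p v) i ∧ F.Adj (p v) j := by
  simp only [satEdge_iff_of_cliqueFree (cliqueFree_comap hF p), comap_adj, hp.exists]

variable [Fintype V] [DecidableEq ι]

lemma surjective_of_card_fiber_eq {p : V → ι} {a : ι → ℕ} (ha : ∀ i, #{v | p v = i} = a i)
    (hpos : ∀ i, 0 < a i) : Surjective p := fun i ↦ by
  obtain ⟨v, hv⟩ := card_pos.mp <| (ha i).symm ▸ hpos i
  exact ⟨v, (mem_filter.mp hv).2⟩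

variable [Fintype ι]

lemma exists_card_fiber_eq (a : ι → ℕ) {n : ℕ} (h : ∑ i, a i = n) :
    ∃ p : Fin n → ι, ∀ i, #{v | p v = i} = a i := by
  let e := Fintype.equivFinOfCardEq (by simpa using h : Fintype.card (Σ i, Fin (a i)) = n)
  refine ⟨fun v ↦ (e.symm v).1, fun i ↦ ?_⟩
  rw [← Fintype.card_subtype, Fintype.card_congr (e.symm.subtypeEquivOfSubtype.trans
    (Equiv.sigmaSubtype i)), Fintype.card_fin]

variable {p : V → ι} {a : ι → ℕ}

lemma sum_comp_eq_sum_card_mul (ha : ∀ i, #{v | p v = i} = a i) (f : ι → ℕ) :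
    ∑ v, f (p v) = ∑ i, a i * f i := by
  simp [← sum_fiberwise' univ p f, ha]

lemma two_mul_ncard_edgeSet_add_sum (G : SimpleGraph V) (r : ι → ι → Prop) [DecidableRel r]
    (hG : ∀ u v, G.Adj u v ↔ u ≠ v ∧ r (p u) (p v)) (ha : ∀ i, #{v | p v = i} = a i) :
    2 * G.edgeSet.ncard + ∑ i with r i i, a i = ∑ i, a i * ∑ j with r i j, a j := by
  classical
  have hdeg (v : V) :
      G.degree v + (if r (p v) (p v) then 1 else 0) = ∑ j with r (p v) j, a j := by
    have hnbr : G.neighborFinset v = ({w | r (p v) (p w)} : Finset V).erase v := by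
      ext w; simp [hG, eq_comm]
    have hcard : #{w | r (p v) (p w)} = ∑ j with r (p v) j, a j := by
      rw [card_filter, sum_comp_eq_sum_card_mul ha (fun j ↦ if r (p v) j then 1 else 0),
        sum_filter]
      simp
    rw [← card_neighborFinset_eq_degree, hnbr, ← hcard]
    split_ifs with hr
    · exact card_erase_add_one (by simpa)
    · rw [erase_eq_of_notMem (by simpa), add_zero]
  calc 2 * G.edgeSet.ncard + ∑ i with r i i, a i
      = ∑ v, G.degree v + ∑ v, (if r (p v) (p v) then 1 else 0) := by
        rw [← coe_edgeFinset, Set.ncard_coe_finset, ← sum_degrees_eq_twice_card_edges,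
          sum_comp_eq_sum_card_mul ha (fun i ↦ if r i i then 1 else 0), sum_filter]
        simp
    _ = ∑ v, ∑ j with r (p v) j, a j := by
        rw [← sum_add_distrib]
        exact sum_congr rfl fun v _ ↦ hdeg v
    _ = _ := sum_comp_eq_sum_card_mul ha (fun i ↦ ∑ j with r i j, a j)

end Blowup

def cycleWithChord : SimpleGraph (Fin 5) := cycleGraph 5 ⊔ edge 0 2

-- Mathlib's instances for `cycleGraph` and `edge` are built by `rw` and block `decide`.
instance : DecidableRel cycleWithChord.Adj := fun a b ↦
  decidable_of_iff ((a - b = 1 ∨ b - a = 1) ∨ (a = 0 ∧ b = 2 ∨ a = 2 ∧ b = 0) ∧ a ≠ b) <| by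
    simp [cycleWithChord, cycleGraph_adj, edge_adj]

lemma cycleWithChord_cliqueFree : cycleWithChord.CliqueFree 4 :=
  Colorable.cliqueFree (n := 3) ⟨Coloring.mk ![0, 1, 2, 0, 1] <| by decide⟩ (by norm_num)

lemma cycleWithChord_common_edge_iff (a b : Fin 5) :
    (¬ cycleWithChord.Adj a b ∧ ∃ i j, cycleWithChord.Adj i j ∧ cycleWithChord.Adj a i ∧
      cycleWithChord.Adj a j ∧ cycleWithChord.Adj b i ∧ cycleWithChord.Adj b j) ↔
      a = b ∧ a < 3 := by
  revert a b; decide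

/-- For `m = k + 1` these are the paper's part sizes `16m, 4m + 1, 16m, 15m, 15m - 1`. -/
def blowupSizes (k : ℕ) : Fin 5 → ℕ :=
  ![16 * k + 16, 4 * k + 5, 16 * k + 16, 15 * k + 15, 15 * k + 14]

lemma blowupSizes_pos (k : ℕ) (i : Fin 5) : 0 < blowupSizes k i := by
  fin_cases i <;> simp [blowupSizes]

lemma sum_blowupSizes (k : ℕ) : ∑ i, blowupSizes k i = 66 * (k + 1) := by
  simp [blowupSizes, Fin.sum_univ_five]; ring

section CycleWithChordBlowup

variable {V : Type*} [Fintype V] {p : V → Fin 5} {k : ℕ}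

lemma ncard_edgeSet_comap_cycleWithChord (hp : ∀ i, #{v | p v = i} = blowupSizes k i) :
    (cycleWithChord.comap p).edgeSet.ncard = 1089 * (k + 1) ^ 2 + (k + 1) := by
  have h := two_mul_ncard_edgeSet_add_sum (cycleWithChord.comap p) cycleWithChord.Adj
    (fun u v ↦ ⟨fun h ↦ ⟨h.ne, h⟩, And.right⟩) hp
  simp +decide [blowupSizes, Fin.sum_univ_five, sum_filter] at h
  linarith

lemma satCount_comap_cycleWithChord (hp : ∀ i, #{v | p v = i} = blowupSizes k i) :
    satCount (cycleWithChord.comap p) + 14 * (k + 1) = 264 * (k + 1) ^ 2 := by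
  have hsurj : Surjective p := surjective_of_card_fiber_eq hp (blowupSizes_pos k)
  have h := two_mul_ncard_edgeSet_add_sum (satGraph (cycleWithChord.comap p))
    (fun i j ↦ i = j ∧ i < 3) (fun u v ↦ by
      rw [satGraph_adj, satEdge_comap_iff cycleWithChord_cliqueFree hsurj,
        cycleWithChord_common_edge_iff]) hp
  rw [← satCount_eq_ncard_edgeSet] at h
  simp +decide [blowupSizes, Fin.sum_univ_five, sum_filter] at h
  linarith

end CycleWithChordBlowup

theorem stmt3_general (n : ℕ) (h66 : 66 ∣ n) :
    ∃ H : SimpleGraph (Fin n), H.CliqueFree 4 ∧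
      H.edgeSet.ncard = n ^ 2 / 4 + n / 66 ∧
      (satCount H : ℝ) = 2 * (n : ℝ) ^ 2 / 33 - 7 * n / 33 := by
  obtain ⟨m, rfl⟩ := h66
  rcases m with _ | k
  · exact ⟨⊥, cliqueFree_bot (by norm_num), by simp, by simp [satCount]⟩
  obtain ⟨p, hp⟩ := exists_card_fiber_eq (blowupSizes k) (sum_blowupSizes k)
  refine ⟨cycleWithChord.comap p, cliqueFree_comap cycleWithChord_cliqueFree p, ?_, ?_⟩
  · rw [ncard_edgeSet_comap_cycleWithChord hp,
      show (66 * (k + 1)) ^ 2 = 4 * (1089 * (k + 1) ^ 2) by ring]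
    simp
  · have h : (satCount (cycleWithChord.comap p) : ℝ) + 14 * (k + 1) = 264 * (k + 1) ^ 2 := by
      exact_mod_cast satCount_comap_cycleWithChord hp
    push_cast
    linear_combination h

theorem stmt3 (n : ℕ) (hn : 0 < n) (h66 : 66 ∣ n) :
    ∃ H : SimpleGraph (Fin n), H.CliqueFree 4 ∧
      H.edgeSet.ncard = n ^ 2 / 4 + n / 66 ∧
      (satCount H : ℝ) = 2 * (n : ℝ) ^ 2 / 33 - 7 * n / 33 :=
  stmt3_general n h66
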